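/- arXiv:2111.08549 — 2 statements merged into one kernel-verified Lean document; each statement's English description precedes it below -/
import Mathlib

section
/- Let (A, B, C) be a recollement of abelian categories with enough projectives. If i*(P(A))-resolutions are considered, one has gl.dim C ≤ gl.dim B + sup{pd_C j*(P) : P ∈ P(B)}. In particular, if i^! or j_* is exact, then gl.dim C ≤ gl.dim B. -/
/-!
The exact functor `j^*` carries a projective resolution of `j_! M` of length `≤ gl.dim B` to a
resolution of `j^* j_! M ≅ M` by objects `j^* P` with `P` projective. Dimension shifting along
the short exact pieces, via the `Ext` characterisation of projective dimension, bounds `pd M` by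
the length of this resolution plus `sup pd j^* P`. If `i^!` or `j_*` is exact, then `j_*`
preserves epimorphisms, so its left adjoint `j^*` preserves projectives and the supremum is `0`.
-/

open CategoryTheory CategoryTheory.Limits

attribute [local instance] Abelian.hasFiniteBiproducts

universe v₁ v₂ v₃ u₁ u₂ u₃

/-- A recollement of abelian categories. -/
structure Recollement (A : Type u₁) (B : Type u₂) (C : Type u₃)
    [Category.{v₁} A] [Category.{v₂} B] [Category.{v₃} C]
    [Abelian A] [Abelian B] [Abelian C] where
  /-- the functor `i^*` -/
  iStar : B ⥤ A
  /-- the functor `i_*` -/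
  iLower : A ⥤ B
  /-- the functor `i^!` -/
  iShriek : B ⥤ A
  /-- the functor `j_!` -/
  jLower : C ⥤ B
  /-- the functor `j^*` -/
  jStar : B ⥤ C
  /-- the functor `j_*` -/
  jUpper : C ⥤ B
  adj₁ : iStar ⊣ iLower
  adj₂ : iLower ⊣ iShriek
  adj₃ : jLower ⊣ jStar
  adj₄ : jStar ⊣ jUpper
  iLower_preservesFiniteLimits : PreservesFiniteLimits iLower
  iLower_preservesFiniteColimits : PreservesFiniteColimits iLower
  jStar_preservesFiniteLimits : PreservesFiniteLimits jStar
  jStar_preservesFiniteColimits : PreservesFiniteColimits jStar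
  iStar_preservesFiniteColimits : PreservesFiniteColimits iStar
  iShriek_preservesFiniteLimits : PreservesFiniteLimits iShriek
  jLower_preservesFiniteColimits : PreservesFiniteColimits jLower
  jUpper_preservesFiniteLimits : PreservesFiniteLimits jUpper
  iLower_full : iLower.Full
  iLower_faithful : iLower.Faithful
  jLower_full : jLower.Full
  jLower_faithful : jLower.Faithful
  jUpper_full : jUpper.Full
  jUpper_faithful : jUpper.Faithful
  im_eq_ker : ∀ b : B, IsZero (jStar.obj b) ↔ ∃ a : A, Nonempty (iLower.obj a ≅ b)

variable {A : Type u₁} [Category.{v₁} A] [Abelian A]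

/-- A resolving subcategory: contains the projectives, closed under extensions
and under kernels of epimorphisms (given by short exact sequences). -/
structure IsResolving (X : Set A) : Prop where
  projective_mem : ∀ P : A, Projective P → P ∈ X
  ext_closed : ∀ S : ShortComplex A, S.ShortExact → S.X₁ ∈ X → S.X₃ ∈ X → S.X₂ ∈ X
  ker_epi_closed : ∀ S : ShortComplex A, S.ShortExact → S.X₂ ∈ X → S.X₃ ∈ X → S.X₁ ∈ X

/-- `ResLE X M n` : there is an exact sequence `0 → X_n → ⋯ → X_0 → M → 0`
with all `X_i ∈ X`. -/
inductive ResLE (X : Set A) : A → ℕ → Prop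
  | zero {M X₀ : A} (e : X₀ ≅ M) (hX₀ : X₀ ∈ X) : ResLE X M 0
  | succ {M K X₀ : A} {n : ℕ} (f : K ⟶ X₀) (g : X₀ ⟶ M) (w : f ≫ g = 0)
      (hse : (ShortComplex.mk f g w).ShortExact) (hX₀ : X₀ ∈ X)
      (hK : ResLE X K n) : ResLE X M (n + 1)

/-- The `X`-resolution dimension of an object `M` (`⊤` if there is no finite
`X`-resolution). -/
noncomputable def resDim (X : Set A) (M : A) : ℕ∞ :=
  sInf {n : ℕ∞ | ∃ m : ℕ, ResLE X M m ∧ n = (m : ℕ∞)}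

/-- The `X`-resolution dimension of the whole category. -/
noncomputable def resDimCat (X : Set A) : ℕ∞ :=
  ⨆ M : A, resDim X M

/-- The closure of a class of objects under finite direct sums and direct summands. -/
def addClosure (D : Set A) : Set A :=
  {a | ∃ (n : ℕ) (f : Fin n → A), (∀ i, f i ∈ D) ∧
    ∃ (s : a ⟶ ⨁ f) (r : ⨁ f ⟶ a), s ≫ r = 𝟙 a}

lemma ENat.le_add_of_forall_natCast_le {a b c : ℕ∞}
    (h : ∀ n k : ℕ, b ≤ n → c ≤ k → a ≤ n + k) : a ≤ b + c := by
  induction b using ENat.recTopCoe with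
  | top => simp
  | coe n =>
    induction c using ENat.recTopCoe with
    | top => simp
    | coe k => exact_mod_cast h n k le_rfl le_rfl

lemma resDim_le_iff {X : Set A} {M : A} {n : ℕ} :
    resDim X M ≤ n ↔ ∃ m ≤ n, ResLE X M m := by
  unfold resDim
  constructor
  · intro h
    have hne : {k : ℕ∞ | ∃ m : ℕ, ResLE X M m ∧ k = m}.Nonempty := by
      by_contra hempty
      rw [Set.not_nonempty_iff_eq_empty] at hempty
      simp [hempty] at h
    obtain ⟨m, hm, hdim⟩ := csInf_mem hne
    exact ⟨m, by exact_mod_cast hdim ▸ h, hm⟩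
  · rintro ⟨m, hmn, hm⟩
    exact sInf_le_of_le ⟨m, hm, rfl⟩ (by exact_mod_cast hmn)

lemma ResLE.map {D : Type*} [Category D] [Abelian D] (F : A ⥤ D)
    [PreservesFiniteLimits F] [PreservesFiniteColimits F]
    {X : Set A} {M : A} {n : ℕ} (h : ResLE X M n) : ResLE (F.obj '' X) (F.obj M) n := by
  induction h with
  | zero e hX₀ => exact .zero (F.mapIso e) ⟨_, hX₀, rfl⟩
  | succ f g w hse hX₀ _ ih =>
    exact .succ (F.map f) (F.map g) (by rw [← F.map_comp, w, F.map_zero])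
      (hse.map_of_exact F) ⟨_, hX₀, rfl⟩ ih

lemma ResLE.hasProjectiveDimensionLE {X : Set A} {k : ℕ}
    (hX : ∀ x ∈ X, HasProjectiveDimensionLE x k) {M : A} {n : ℕ} (h : ResLE X M n) :
    HasProjectiveDimensionLE M (n + k) := by
  induction h with
  | zero e hX₀ =>
    have := hX _ hX₀
    simpa using hasProjectiveDimensionLT_of_iso e (k + 1)
  | @succ _ _ X₀ n _ _ _ hse hX₀ _ ih =>
    have := hX _ hX₀
    rw [show n + 1 + k = n + k + 1 by omega]
    exact hse.hasProjectiveDimensionLT_X₃ _ ih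
      (hasProjectiveDimensionLT_of_ge X₀ (k + 1) _ (by omega))

lemma resLE_projective_of_hasProjectiveDimensionLE [EnoughProjectives A] :
    ∀ (n : ℕ) {M : A} [HasProjectiveDimensionLE M n], ResLE {P | Projective P} M n
  | 0, M, _ => .zero (Iso.refl M) (projective_iff_hasProjectiveDimensionLT_one.2 ‹_›)
  | n + 1, M, _ => by
    have hS : (ShortComplex.mk _ _ (kernel.condition (Projective.π M))).ShortExact :=
      { exact := ShortComplex.exact_kernel _ }
    have : HasProjectiveDimensionLE (kernel (Projective.π M)) n :=
      hS.hasProjectiveDimensionLT_X₁ (n + 1) (hasProjectiveDimensionLT_of_ge _ 1 _ (by omega))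
        inferInstance
    exact .succ _ _ _ hS (Projective.projective_over M)
      (resLE_projective_of_hasProjectiveDimensionLE n)

lemma hasProjectiveDimensionLE_of_resDim_le {M : A} {n : ℕ}
    (h : resDim {P | Projective P} M ≤ n) : HasProjectiveDimensionLE M n := by
  obtain ⟨m, hmn, hm⟩ := resDim_le_iff.1 h
  have := hm.hasProjectiveDimensionLE (k := 0) fun x (_ : Projective x) => inferInstance
  exact hasProjectiveDimensionLT_of_ge M (m + 0 + 1) (n + 1) (by omega)

lemma resDim_le_of_hasProjectiveDimensionLE [EnoughProjectives A] (M : A) (n : ℕ)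
    [HasProjectiveDimensionLE M n] : resDim {P | Projective P} M ≤ n :=
  resDim_le_iff.2 ⟨n, le_rfl, resLE_projective_of_hasProjectiveDimensionLE n⟩

lemma iSup_resDim_obj_projective_eq_zero {D : Type*} [Category D] [Abelian D] (F : D ⥤ A)
    [F.PreservesProjectiveObjects] :
    ⨆ (P : D) (_ : Projective P), resDim {Q | Projective Q} (F.obj P) = 0 :=
  nonpos_iff_eq_zero.1 <| iSup₂_le fun _ hP => resDim_le_iff.2
    ⟨0, le_rfl, .zero (Iso.refl _) (F.projective_obj_of_projective hP)⟩

namespace Recollement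

variable {B : Type u₂} {C : Type u₃} [Category.{v₂} B] [Category.{v₃} C] [Abelian B] [Abelian C]
  (R : Recollement A B C)

lemma iShriek_jUpper_isZero (Y : C) : IsZero (R.iShriek.obj (R.jUpper.obj Y)) := by
  -- `Hom(i_* a, j_* Y) ≃ Hom(j^* i_* a, Y)` vanishes because `j^* i_* = 0`.
  rw [IsZero.iff_id_eq_zero]
  apply (R.adj₂.homEquiv _ _).symm.injective
  apply (R.adj₄.homEquiv _ _).symm.injective
  exact ((R.im_eq_ker _).2 ⟨_, ⟨Iso.refl _⟩⟩).eq_of_src _ _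

lemma isZero_of_isZero_jStar_of_isZero_iShriek {b : B} (hj : IsZero (R.jStar.obj b))
    (hi : IsZero (R.iShriek.obj b)) : IsZero b := by
  have := R.iLower_full
  have := R.iLower_faithful
  obtain ⟨a, ⟨e⟩⟩ := (R.im_eq_ker b).1 hj
  have ha : IsZero a := hi.of_iso (asIso (R.adj₂.unit.app a) ≪≫ R.iShriek.mapIso e)
  exact (R.iLower.map_isZero ha).of_iso e.symm

lemma jUpper_preservesEpimorphisms_of_iShriek [PreservesFiniteColimits R.iShriek] :
    R.jUpper.PreservesEpimorphisms where
  preserves {Y Z} g _ := by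
    have := R.jStar_preservesFiniteColimits
    have := R.jUpper_full
    have := R.jUpper_faithful
    have : Epi (R.jStar.map (R.jUpper.map g)) := by
      rw [← epi_comp_iff_of_isIso _ (R.adj₄.counit.app Z), ← Functor.comp_map,
        R.adj₄.counit.naturality g]
      infer_instance
    apply Preadditive.epi_of_isZero_cokernel
    apply R.isZero_of_isZero_jStar_of_isZero_iShriek
    · exact (isZero_cokernel_of_epi _).of_iso (PreservesCokernel.iso R.jStar _)
    · exact (R.iShriek_jUpper_isZero Z).of_epi (R.iShriek.map (cokernel.π _))

lemma jStar_preservesProjectiveObjects_of_exact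
    (h : (PreservesFiniteLimits R.iShriek ∧ PreservesFiniteColimits R.iShriek) ∨
      (PreservesFiniteLimits R.jUpper ∧ PreservesFiniteColimits R.jUpper)) :
    R.jStar.PreservesProjectiveObjects := by
  have : R.jUpper.PreservesEpimorphisms := by
    rcases h with ⟨-, _⟩ | ⟨-, _⟩
    · exact R.jUpper_preservesEpimorphisms_of_iShriek
    · infer_instance
  exact Functor.preservesProjectiveObjects_of_adjunction_of_preservesEpimorphisms R.adj₄

lemma resDim_le_add [EnoughProjectives C] (M : C) {n k : ℕ}
    (hB : resDimCat {b : B | Projective b} ≤ n)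
    (hk : ⨆ (P : B) (_ : Projective P), resDim {c : C | Projective c} (R.jStar.obj P) ≤ k) :
    resDim {c : C | Projective c} M ≤ (n + k : ℕ) := by
  have := R.jStar_preservesFiniteLimits
  have := R.jStar_preservesFiniteColimits
  have := R.jLower_full
  have := R.jLower_faithful
  obtain ⟨m, hmn, hres⟩ := resDim_le_iff.1 ((le_iSup _ (R.jLower.obj M)).trans hB)
  have hX : ∀ c ∈ R.jStar.obj '' {b : B | Projective b}, HasProjectiveDimensionLE c k := by
    rintro _ ⟨P, hP, rfl⟩
    exact hasProjectiveDimensionLE_of_resDim_le ((le_iSup₂_of_le P hP le_rfl).trans hk)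
  have := (hres.map R.jStar).hasProjectiveDimensionLE hX
  have e : R.jStar.obj (R.jLower.obj M) ≅ M := (asIso (R.adj₃.unit.app M)).symm
  have := hasProjectiveDimensionLT_of_iso e (m + k + 1)
  have := hasProjectiveDimensionLT_of_ge M (m + k + 1) (n + k + 1) (by omega)
  exact resDim_le_of_hasProjectiveDimensionLE M (n + k)

end Recollement

theorem gldim_C_le_general
    (A : Type u₁) (B : Type u₂) (C : Type u₃)
    [Category.{v₁} A] [Category.{v₂} B] [Category.{v₃} C]
    [Abelian A] [Abelian B] [Abelian C]
    [EnoughProjectives C]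
    (R : Recollement A B C) :
    (resDimCat {c : C | Projective c} ≤ resDimCat {b : B | Projective b} +
      ⨆ (P : B) (_ : Projective P), resDim {c : C | Projective c} (R.jStar.obj P)) ∧
    (((PreservesFiniteLimits R.iShriek ∧ PreservesFiniteColimits R.iShriek) ∨
      (PreservesFiniteLimits R.jUpper ∧ PreservesFiniteColimits R.jUpper)) →
      resDimCat {c : C | Projective c} ≤ resDimCat {b : B | Projective b}) := by
  have hle : resDimCat {c : C | Projective c} ≤ resDimCat {b : B | Projective b} +
      ⨆ (P : B) (_ : Projective P), resDim {c : C | Projective c} (R.jStar.obj P) :=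
    ENat.le_add_of_forall_natCast_le fun n k hn hk =>
      iSup_le fun M => by exact_mod_cast R.resDim_le_add M hn hk
  refine ⟨hle, fun hexact => ?_⟩
  have := R.jStar_preservesProjectiveObjects_of_exact hexact
  rwa [iSup_resDim_obj_projective_eq_zero R.jStar, add_zero] at hle

/-- `gl.dim C ≤ gl.dim B + sup{pd_C j*(P) : P ∈ P(B)}`; in particular, if `i^!` or `j_*`
is exact, then `gl.dim C ≤ gl.dim B`. -/
theorem gldim_C_le
    (A : Type u₁) (B : Type u₂) (C : Type u₃)
    [Category.{v₁} A] [Category.{v₂} B] [Category.{v₃} C]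
    [Abelian A] [Abelian B] [Abelian C]
    [EnoughProjectives A] [EnoughProjectives B] [EnoughProjectives C]
    (R : Recollement A B C) :
    (resDimCat {c : C | Projective c} ≤ resDimCat {b : B | Projective b} +
      ⨆ (P : B) (_ : Projective P), resDim {c : C | Projective c} (R.jStar.obj P)) ∧
    (((PreservesFiniteLimits R.iShriek ∧ PreservesFiniteColimits R.iShriek) ∨
      (PreservesFiniteLimits R.jUpper ∧ PreservesFiniteColimits R.jUpper)) →
      resDimCat {c : C | Projective c} ≤ resDimCat {b : B | Projective b}) :=
  gldim_C_le_general A B C R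
end

section
/- Let (A, B, C) be a recollement of abelian categories with enough projectives such that i* is exact and j* preserves projectives. Let X' and X'' be resolving subcategories of A and C, and set X := {B ∈ B : i*(B) ∈ X' and j*(B) ∈ X''}. Then X-res B = max{X'-res A, X''-res C}, i.e., the X-resolution dimension of B equals the maximum of the X'-resolution dimension of A and the X''-resolution dimension of C. -/
open CategoryTheory CategoryTheory.Limits

attribute [local instance] Abelian.hasFiniteBiproducts

universe v₁ v₂ v₃ u₁ u₂ u₃

variable {A : Type u₁} [Category.{v₁} A] [Abelian A]

/-!
An `n`-th syzygy `K` of `M ∈ B` is sent by the exact, projective-preserving functors `i*` and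
`j*` to `n`-th syzygies of `i*M` and `j*M`. If `X'`-res `A` and `X''`-res `C` are at most `n`,
these syzygies lie in `X'` and `X''` (a resolving subcategory contains every `n`-th syzygy of an
object of resolution dimension at most `n`), so `K ∈ X` and `M` has an `X`-resolution of length
`n`. Conversely, `i*` and `j*` are essentially surjective, their right adjoints being fully
faithful, and they carry `X`-resolutions to `X'`- and `X''`-resolutions.
-/

open ZeroObject

lemma CategoryTheory.Adjunction.essSurj_of_full_of_faithful {C₁ : Type*} [Category C₁]
    {C₂ : Type*} [Category C₂] {F : C₁ ⥤ C₂} {G : C₂ ⥤ C₁} (adj : F ⊣ G) [G.Full] [G.Faithful] :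
    F.EssSurj :=
  ⟨fun d => ⟨G.obj d, ⟨asIso (adj.counit.app d)⟩⟩⟩

lemma shortExact_kernel {Y M : A} (g : Y ⟶ M) [Epi g] :
    (ShortComplex.mk (kernel.ι g) g (kernel.condition g)).ShortExact :=
  .mk' (ShortComplex.exact_kernel g) inferInstance ‹_›

lemma shortExact_zero_of_iso {Y M : A} (e : Y ≅ M) :
    (ShortComplex.mk (0 : (0 : A) ⟶ Y) e.hom zero_comp).ShortExact :=
  .mk' ((ShortComplex.exact_iff_mono _ rfl).2 inferInstance)
    ⟨fun u v _ => (isZero_zero A).eq_of_tgt u v⟩ inferInstance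

lemma isPullback_kernel_comp {Y Q N : A} (g' : Y ⟶ Q) (g : Q ⟶ N) :
    IsPullback (kernel.ι (g' ≫ g)) (kernel.map (g' ≫ g) g g' (𝟙 N) (by simp)) g'
      (kernel.ι g) where
  w := by simp
  isLimit' := ⟨PullbackCone.IsLimit.mk _
    (fun s => kernel.lift _ s.fst (by rw [← Category.assoc, s.condition, Category.assoc,
      kernel.condition, comp_zero]))
    (fun s => by simp) (fun s => by ext; simp [s.condition])
    (fun s m h₁ _ => by ext; simpa using h₁)⟩

lemma isPullback_biprod_map {Y M : A} (g : Y ⟶ M) (P : A) :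
    IsPullback (biprod.map g (𝟙 P)) biprod.fst biprod.fst g where
  w := by simp
  isLimit' := ⟨PullbackCone.IsLimit.mk _
    (fun s => biprod.lift s.snd (s.fst ≫ biprod.snd))
    (fun s => by ext <;> simp [s.condition]) (fun s => by simp)
    (fun s m h₁ h₂ => by
      ext
      · simpa using h₂
      · simpa using h₁ =≫ biprod.snd)⟩

variable {X : Set A}

lemma IsResolving.zero_mem (hX : IsResolving X) : (0 : A) ∈ X :=
  hX.projective_mem 0 inferInstance

lemma IsResolving.mem_of_iso (hX : IsResolving X) {M N : A} (e : M ≅ N) (hM : M ∈ X) : N ∈ X :=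
  hX.ext_closed _ (shortExact_zero_of_iso e.symm) hX.zero_mem hM

lemma IsResolving.biprod_mem (hX : IsResolving X) {Y P : A} (hY : Y ∈ X) (hP : P ∈ X) :
    (Y ⊞ P) ∈ X :=
  hX.ext_closed _ (ShortComplex.Splitting.ofHasBinaryBiproduct Y P).shortExact hY hP

namespace ResLE

lemma of_iso {M N : A} (e : M ≅ N) {n : ℕ} (h : ResLE X M n) : ResLE X N n := by
  cases h with
  | zero e' h' => exact .zero (e'.trans e) h'
  | succ f g w hse h' hK =>
    refine .succ f (g ≫ e.hom) (by simp [reassoc_of% w]) ?_ h' hK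
    exact ShortComplex.shortExact_of_iso
      (ShortComplex.isoMk (S₁ := ShortComplex.mk f g w) (Iso.refl _) (Iso.refl _) e
        (by simp) (by simp)) hse

lemma succ_of_epi {Y M : A} {n : ℕ} (g : Y ⟶ M) [Epi g] (hY : Y ∈ X)
    (h : ResLE X (kernel g) n) : ResLE X M (n + 1) :=
  .succ _ _ _ (shortExact_kernel g) hY h

lemma exists_epi_of_succ {M : A} {n : ℕ} (h : ResLE X M (n + 1)) :
    ∃ (Y : A) (g : Y ⟶ M), Epi g ∧ Y ∈ X ∧ ResLE X (kernel g) n := by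
  cases h with
  | succ f g w hse hY hK =>
    have := hse.epi_g
    exact ⟨_, g, inferInstance, hY,
      hK.of_iso (IsLimit.conePointUniqueUpToIso hse.fIsKernel (kernelIsKernel g))⟩

lemma mem_of_zero (hX : IsResolving X) {M : A} (h : ResLE X M 0) : M ∈ X := by
  cases h with
  | zero e h' => exact hX.mem_of_iso e h'

lemma le_succ (hX : IsResolving X) {M : A} {n : ℕ} (h : ResLE X M n) : ResLE X M (n + 1) := by
  induction h with
  | zero e h' =>
    exact .succ _ _ _ (shortExact_zero_of_iso e) h' (.zero (Iso.refl 0) hX.zero_mem)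
  | succ f g w hse h' _ ih => exact .succ f g w hse h' ih

lemma mono (hX : IsResolving X) {M : A} {m n : ℕ} (hmn : m ≤ n) (h : ResLE X M m) :
    ResLE X M n := by
  induction hmn with
  | refl => exact h
  | step _ ih => exact ih.le_succ hX

lemma biprod (hX : IsResolving X) {M P : A} {n : ℕ} (hP : P ∈ X) (h : ResLE X M n) :
    ResLE X (M ⊞ P) n := by
  cases n with
  | zero => exact .zero (Iso.refl _) (hX.biprod_mem (h.mem_of_zero hX) hP)
  | succ n =>
    obtain ⟨Y, g, _, hY, hK⟩ := h.exists_epi_of_succ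
    have sq := isPullback_biprod_map g P
    have := isIso_kernel_map_of_isPullback sq
    exact succ_of_epi (biprod.map g (𝟙 P)) (hX.biprod_mem hY hP)
      (hK.of_iso (asIso (kernel.map _ _ _ _ sq.w)).symm)

lemma kernel_of_epi (hX : IsResolving X) {Q N : A} {n : ℕ} (g : Q ⟶ N) [Epi g] (hN : N ∈ X)
    (h : ResLE X Q n) : ResLE X (kernel g) n := by
  cases n with
  | zero =>
    exact .zero (Iso.refl _) (hX.ker_epi_closed _ (shortExact_kernel g) (h.mem_of_zero hX) hN)
  | succ n =>
    obtain ⟨Y, g', _, hY, hK⟩ := h.exists_epi_of_succ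
    have sq := (isPullback_kernel_comp g' g).flip
    have : Epi (kernel.map (g' ≫ g) g g' (𝟙 N) (by simp)) :=
      Abelian.epi_fst_of_isLimit _ _ sq.isLimit
    have := isIso_kernel_map_of_isPullback sq
    exact succ_of_epi _ (hX.ker_epi_closed _ (shortExact_kernel (g' ≫ g)) hY hN)
      (hK.of_iso (asIso (kernel.map _ _ _ _ sq.w)).symm)

/-- The pullback of `π` along the first step `Y ⟶ M` of a resolution of `M` splits, `P` being
projective, and is an extension of `Y ∈ X` by `kernel π`. -/
lemma kernel_of_projective (hX : IsResolving X) {P M : A} {n : ℕ} (π : P ⟶ M) [Epi π]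
    [Projective P] (h : ResLE X M (n + 1)) : ResLE X (kernel π) n := by
  obtain ⟨Y, g, _, hY, hK⟩ := h.exists_epi_of_succ
  have sq := IsPullback.of_hasPullback π g
  have := isIso_kernel_map_of_isPullback sq
  have := isIso_kernel_map_of_isPullback sq.flip
  have eQ := (shortExact_kernel (pullback.fst π g)).splittingOfProjective.isoBinaryBiproduct
  have hQ : ResLE X (pullback π g) n :=
    ((hK.of_iso (asIso (kernel.map _ _ _ _ sq.w)).symm).biprod hX
      (hX.projective_mem P ‹_›)).of_iso eQ.symm
  exact (hQ.kernel_of_epi hX (pullback.snd π g) hY).of_iso (asIso (kernel.map _ _ _ _ sq.flip.w))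

end ResLE

inductive IsSyzygy : A → ℕ → A → Prop
  | zero (M : A) : IsSyzygy M 0 M
  | succ {M K P K₁ : A} {n : ℕ} (f : K₁ ⟶ P) (g : P ⟶ M) (w : f ≫ g = 0)
      (hse : (ShortComplex.mk f g w).ShortExact) (hP : Projective P)
      (h : IsSyzygy K₁ n K) : IsSyzygy M (n + 1) K

lemma exists_isSyzygy [EnoughProjectives A] (M : A) (n : ℕ) : ∃ K, IsSyzygy M n K := by
  induction n generalizing M with
  | zero => exact ⟨M, .zero M⟩
  | succ n ih =>
    obtain ⟨K, hK⟩ := ih (kernel (Projective.π M))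
    exact ⟨K, .succ _ _ _ (shortExact_kernel _) inferInstance hK⟩

namespace IsSyzygy

lemma mem_of_resLE (hX : IsResolving X) {M K : A} {n : ℕ} (hK : IsSyzygy M n K)
    (h : ResLE X M n) : K ∈ X := by
  induction hK with
  | zero M => exact h.mem_of_zero hX
  | succ f g w hse hP _ ih =>
    have := hse.epi_g
    exact ih ((h.kernel_of_projective hX g).of_iso
      (IsLimit.conePointUniqueUpToIso (kernelIsKernel g) hse.fIsKernel))

lemma resLE (hX : ∀ P, Projective P → P ∈ X) {M K : A} {n : ℕ} (hK : IsSyzygy M n K) (h : K ∈ X) :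
    ResLE X M n := by
  induction hK with
  | zero M => exact .zero (Iso.refl M) h
  | succ f g w hse hP _ ih => exact .succ f g w hse (hX _ hP) (ih h)

end IsSyzygy

section Functor

variable {D : Type u₂} [Category.{v₂} D] [Abelian D] (F : A ⥤ D)
  [PreservesFiniteLimits F] [PreservesFiniteColimits F]

lemma ResLE.map_s17 {Y : Set D} (hF : ∀ a ∈ X, F.obj a ∈ Y) {M : A} {n : ℕ}
    (h : ResLE X M n) : ResLE Y (F.obj M) n := by
  induction h with
  | zero e h' => exact .zero (F.mapIso e) (hF _ h')
  | succ f g w hse h' _ ih =>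
    exact .succ _ _ (by rw [← F.map_comp, w, F.map_zero]) (hse.map_of_exact F) (hF _ h') ih

lemma IsSyzygy.map_s17 [F.PreservesProjectiveObjects] {M K : A} {n : ℕ} (h : IsSyzygy M n K) :
    IsSyzygy (F.obj M) n (F.obj K) := by
  induction h with
  | zero M => exact .zero _
  | succ f g w hse hP _ ih =>
    exact .succ _ _ (by rw [← F.map_comp, w, F.map_zero]) (hse.map_of_exact F)
      (F.projective_obj_of_projective hP) ih

end Functor

lemma resDim_le_of_resLE {M : A} {n : ℕ} (h : ResLE X M n) : resDim X M ≤ n :=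
  sInf_le ⟨n, h, rfl⟩

lemma resLE_of_resDim_le (hX : IsResolving X) {M : A} {n : ℕ} (h : resDim X M ≤ n) :
    ResLE X M n := by
  have hne : {k : ℕ∞ | ∃ m : ℕ, ResLE X M m ∧ k = m}.Nonempty := by
    by_contra hempty
    simp [resDim, Set.not_nonempty_iff_eq_empty.1 hempty] at h
  obtain ⟨m, hm, hk⟩ := csInf_mem hne
  rw [resDim, hk] at h
  exact hm.mono hX (by exact_mod_cast h)

lemma resLE_of_resDimCat_le (hX : IsResolving X) (M : A) {n : ℕ} (h : resDimCat X ≤ n) :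
    ResLE X M n :=
  resLE_of_resDim_le hX ((le_iSup (resDim X) M).trans h)

lemma resDimCat_le_of_essSurj {D : Type u₂} [Category.{v₂} D] [Abelian D] (F : A ⥤ D)
    [PreservesFiniteLimits F] [PreservesFiniteColimits F] [F.EssSurj] {Y : Set D}
    (hF : ∀ a ∈ X, F.obj a ∈ Y) : resDimCat Y ≤ resDimCat X := by
  refine iSup_le fun d => le_iSup_of_le (F.objPreimage d) (le_sInf ?_)
  rintro _ ⟨m, hm, rfl⟩
  exact resDim_le_of_resLE ((hm.map_s17 F hF).of_iso (F.objObjPreimageIso d))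

lemma resDimCat_glued_le [EnoughProjectives A]
    {D : Type u₂} [Category.{v₂} D] [Abelian D] {E : Type u₃} [Category.{v₃} E] [Abelian E]
    (F : A ⥤ D) (G : A ⥤ E) [PreservesFiniteLimits F] [PreservesFiniteColimits F]
    [PreservesFiniteLimits G] [PreservesFiniteColimits G]
    [F.PreservesProjectiveObjects] [G.PreservesProjectiveObjects]
    {Y : Set D} {Z : Set E} (hY : IsResolving Y) (hZ : IsResolving Z) :
    resDimCat {a : A | F.obj a ∈ Y ∧ G.obj a ∈ Z} ≤ max (resDimCat Y) (resDimCat Z) := by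
  induction h : max (resDimCat Y) (resDimCat Z) using ENat.recTopCoe with
  | top => exact le_top
  | coe n =>
    obtain ⟨hYn, hZn⟩ := max_le_iff.1 h.le
    refine iSup_le fun M => resDim_le_of_resLE ?_
    obtain ⟨K, hK⟩ := exists_isSyzygy M n
    refine hK.resLE ?_ ⟨?_, ?_⟩
    · exact fun P hP => ⟨hY.projective_mem _ (F.projective_obj_of_projective hP),
        hZ.projective_mem _ (G.projective_obj_of_projective hP)⟩
    · exact (hK.map_s17 F).mem_of_resLE hY (resLE_of_resDimCat_le hY _ hYn)
    · exact (hK.map_s17 G).mem_of_resLE hZ (resLE_of_resDimCat_le hZ _ hZn)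

theorem resDimCat_glued_eq_max_general
    (A : Type u₁) (B : Type u₂) (C : Type u₃)
    [Category.{v₁} A] [Category.{v₂} B] [Category.{v₃} C]
    [Abelian A] [Abelian B] [Abelian C]
    [EnoughProjectives B]
    (R : Recollement A B C)
    (hi : PreservesFiniteLimits R.iStar)
    (hj : ∀ b : B, Projective b → Projective (R.jStar.obj b))
    (X' : Set A) (X'' : Set C) (hX' : IsResolving X') (hX'' : IsResolving X'')
    (X : Set B) (hXdef : X = {b : B | R.iStar.obj b ∈ X' ∧ R.jStar.obj b ∈ X''}) :
    resDimCat X = max (resDimCat X') (resDimCat X'') := by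
  subst hXdef
  have := R.iLower_preservesFiniteColimits
  have := R.iStar_preservesFiniteColimits
  have := R.jStar_preservesFiniteLimits
  have := R.jStar_preservesFiniteColimits
  have := R.iLower_full
  have := R.iLower_faithful
  have := R.jUpper_full
  have := R.jUpper_faithful
  have := Functor.preservesProjectiveObjects_of_adjunction_of_preservesEpimorphisms R.adj₁
  have : R.jStar.PreservesProjectiveObjects := ⟨hj _⟩
  have := R.adj₁.essSurj_of_full_of_faithful
  have := R.adj₄.essSurj_of_full_of_faithful
  exact le_antisymm (resDimCat_glued_le R.iStar R.jStar hX' hX'')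
    (max_le (resDimCat_le_of_essSurj R.iStar fun _ h => h.1)
      (resDimCat_le_of_essSurj R.jStar fun _ h => h.2))

/-- If `i*` is exact and `j*` preserves projectives, then for resolving subcategories
`X'` of `A` and `X''` of `C` and the glued resolving subcategory `X` of `B`, one has
`X`-res `B` = max{`X'`-res `A`, `X''`-res `C`}. -/
theorem resDimCat_glued_eq_max
    (A : Type u₁) (B : Type u₂) (C : Type u₃)
    [Category.{v₁} A] [Category.{v₂} B] [Category.{v₃} C]
    [Abelian A] [Abelian B] [Abelian C]
    [EnoughProjectives A] [EnoughProjectives B] [EnoughProjectives C]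
    (R : Recollement A B C)
    (hi : PreservesFiniteLimits R.iStar)
    (hj : ∀ b : B, Projective b → Projective (R.jStar.obj b))
    (X' : Set A) (X'' : Set C) (hX' : IsResolving X') (hX'' : IsResolving X'')
    (X : Set B) (hXdef : X = {b : B | R.iStar.obj b ∈ X' ∧ R.jStar.obj b ∈ X''}) :
    resDimCat X = max (resDimCat X') (resDimCat X'') :=
  resDimCat_glued_eq_max_general A B C R hi hj X' X'' hX' hX'' X hXdef
end
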